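/- Let ρ and ρ̃ be probability measures on ℝ^d with finite second moments, with means μ := μ(ρ), μ̃ := μ(ρ̃) and covariance matrices Σ := Cov(ρ), Σ̃ := Cov(ρ̃). Then the squared maximum mean discrepancy induced by the quadratic kernel satisfies ∬ k₂(x,y) dρ(x)dρ(y) − 2∬ k₂(x,y) dρ(x)dρ̃(y) + ∬ k₂(x,y) dρ̃(x)dρ̃(y) = 2‖μ − μ̃‖² + ‖(Σ + μμᵀ) − (Σ̃ + μ̃μ̃ᵀ)‖_F², where ‖·‖_F denotes the Frobenius norm of a matrix. -/

import Mathlib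

/-!
The quadratic kernel is the Gram kernel of an explicit finite-dimensional feature map:
`k₂(x, y) = ⟪Φ x, Φ y⟫` with `Φ x = (1, (xᵢ xⱼ)ᵢⱼ, (√2 xᵢ)ᵢ)`. Integrating against `ρ` and `ρ̃`
turns each double integral of `k₂` into an inner product of the mean embeddings `∫ Φ dρ` and
`∫ Φ dρ̃`, so the left-hand side is `‖∫ Φ dρ - ∫ Φ dρ̃‖²`. The coordinates of `∫ Φ dρ` are `1`,
the second moments `Σ + μμᵀ` and `√2 μ`, which gives the right-hand side.
-/

open MeasureTheory RealInnerProductSpace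

/-- The mean `μ(ρ) = ∫ x dρ(x)` of a measure on `ℝ^d`. -/
noncomputable def meanVec {d : ℕ} (ρ : Measure (EuclideanSpace ℝ (Fin d))) :
    EuclideanSpace ℝ (Fin d) := ∫ x, x ∂ρ

/-- The covariance matrix `Cov(ρ) = ∫ (x-μ)(x-μ)ᵀ dρ(x)` of a measure on `ℝ^d`. -/
noncomputable def covMatrix {d : ℕ} (ρ : Measure (EuclideanSpace ℝ (Fin d))) :
    Matrix (Fin d) (Fin d) ℝ :=
  Matrix.of fun i j => ∫ x, (x i - meanVec ρ i) * (x j - meanVec ρ j) ∂ρ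

/-- The quadratic kernel `k₂(x,y) = (⟨x,y⟩+1)²`. -/
noncomputable def quadKernel {d : ℕ} (x y : EuclideanSpace ℝ (Fin d)) : ℝ := (⟪x, y⟫ + 1) ^ 2

section MeanEmbedding

variable {E H : Type*} [MeasurableSpace E] [NormedAddCommGroup H] [InnerProductSpace ℝ H]
  [CompleteSpace H] {ρ ρ' : Measure E} {Φ : E → H}

theorem integral_integral_inner_eq_inner_integral (hρ : Integrable Φ ρ) (hρ' : Integrable Φ ρ') :
    ∫ x, ∫ y, ⟪Φ x, Φ y⟫ ∂ρ' ∂ρ = ⟪∫ x, Φ x ∂ρ, ∫ y, Φ y ∂ρ'⟫ := by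
  simp_rw [integral_inner (𝕜 := ℝ) hρ', real_inner_comm (∫ y, Φ y ∂ρ'),
    integral_inner (𝕜 := ℝ) hρ]

theorem norm_integral_sub_integral_sq (hρ : Integrable Φ ρ) (hρ' : Integrable Φ ρ') :
    ‖∫ x, Φ x ∂ρ - ∫ x, Φ x ∂ρ'‖ ^ 2 = (∫ x, ∫ y, ⟪Φ x, Φ y⟫ ∂ρ ∂ρ)
      - 2 * (∫ x, ∫ y, ⟪Φ x, Φ y⟫ ∂ρ' ∂ρ) + (∫ x, ∫ y, ⟪Φ x, Φ y⟫ ∂ρ' ∂ρ') := by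
  rw [integral_integral_inner_eq_inner_integral hρ hρ,
    integral_integral_inner_eq_inner_integral hρ hρ',
    integral_integral_inner_eq_inner_integral hρ' hρ', norm_sub_sq_real,
    real_inner_self_eq_norm_sq, real_inner_self_eq_norm_sq]

end MeanEmbedding

theorem integrable_of_integrable_norm_sq {α F : Type*} [MeasurableSpace α] [NormedAddCommGroup F]
    {μ : Measure α} [IsFiniteMeasure μ] {f : α → F} (hf : AEStronglyMeasurable f μ)
    (h : Integrable (fun x => ‖f x‖ ^ 2) μ) : Integrable f μ :=
  ((memLp_two_iff_integrable_sq_norm hf).2 h).integrable one_le_two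

theorem EuclideanSpace.integral_apply {α ι : Type*} [MeasurableSpace α] [Fintype ι]
    {μ : Measure α} {f : α → EuclideanSpace ℝ ι} (hf : Integrable f μ) (i : ι) :
    (∫ x, f x ∂μ) i = ∫ x, f x i ∂μ :=
  ((EuclideanSpace.proj i).integral_comp_comm hf).symm

variable {d : ℕ}

noncomputable def quadFeature (x : EuclideanSpace ℝ (Fin d)) :
    EuclideanSpace ℝ (Option (Fin d × Fin d ⊕ Fin d)) :=
  WithLp.toLp 2 fun
    | none => 1
    | some (.inl (i, j)) => x i * x j
    | some (.inr i) => √2 * x i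

theorem quadKernel_eq_inner_quadFeature (x y : EuclideanSpace ℝ (Fin d)) :
    quadKernel x y = ⟪quadFeature x, quadFeature y⟫ := by
  have hxy : ⟪x, y⟫ = ∑ i, x i * y i := by
    simp [PiLp.inner_apply, mul_comm]
  have hsq : (∑ i, x i * y i) ^ 2 = ∑ i, ∑ j, y i * y j * (x i * x j) := by
    rw [sq, Finset.sum_mul_sum]
    exact Finset.sum_congr rfl fun i _ => Finset.sum_congr rfl fun j _ => by ring
  have hlin : ∑ i, √2 * y i * (√2 * x i) = 2 * ∑ i, x i * y i := by
    rw [Finset.mul_sum]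
    exact Finset.sum_congr rfl fun i _ => by
      rw [mul_mul_mul_comm, Real.mul_self_sqrt zero_le_two, mul_comm (y i)]
  simp only [quadKernel, quadFeature, PiLp.inner_apply, Fintype.sum_option, Fintype.sum_sum_type,
    Fintype.sum_prod_type, hxy, RCLike.inner_apply, conj_trivial]
  rw [hlin, ← hsq]
  ring

theorem norm_quadFeature (x : EuclideanSpace ℝ (Fin d)) : ‖quadFeature x‖ = ‖x‖ ^ 2 + 1 := by
  have h := quadKernel_eq_inner_quadFeature x x
  rw [quadKernel, real_inner_self_eq_norm_sq, real_inner_self_eq_norm_sq] at h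
  exact (sq_eq_sq₀ (norm_nonneg _) (by positivity)).1 h.symm

theorem continuous_quadFeature : Continuous (quadFeature (d := d)) := by
  refine (PiLp.continuous_toLp 2 _).comp (continuous_pi fun k => ?_)
  rcases k with _ | ⟨i, j⟩ | i <;> fun_prop

variable {ρ ρ' : Measure (EuclideanSpace ℝ (Fin d))}

theorem integrable_quadFeature [IsFiniteMeasure ρ] (hρ : Integrable (fun x => ‖x‖ ^ 2) ρ) :
    Integrable quadFeature ρ :=
  (integrable_norm_iff continuous_quadFeature.aestronglyMeasurable).1 <|
    (hρ.add (integrable_const 1)).congr (ae_of_all _ fun x => (norm_quadFeature x).symm)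

theorem integrable_coord [IsFiniteMeasure ρ] (hρ : Integrable (fun x => ‖x‖ ^ 2) ρ)
    (i : Fin d) : Integrable (fun x => x i) ρ :=
  (EuclideanSpace.proj (𝕜 := ℝ) i).integrable_comp
    (integrable_of_integrable_norm_sq (f := fun x => x) aestronglyMeasurable_id hρ)

theorem integrable_coord_mul_coord [IsFiniteMeasure ρ] (hρ : Integrable (fun x => ‖x‖ ^ 2) ρ)
    (i j : Fin d) : Integrable (fun x => x i * x j) ρ :=
  (EuclideanSpace.proj (𝕜 := ℝ) (ι := Option (Fin d × Fin d ⊕ Fin d))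
    (some (.inl (i, j)))).integrable_comp (integrable_quadFeature hρ)

theorem meanVec_apply [IsFiniteMeasure ρ] (hρ : Integrable (fun x => ‖x‖ ^ 2) ρ) (i : Fin d) :
    meanVec ρ i = ∫ x, x i ∂ρ :=
  EuclideanSpace.integral_apply (integrable_of_integrable_norm_sq aestronglyMeasurable_id hρ) i

theorem integral_quadFeature [IsProbabilityMeasure ρ] (hρ : Integrable (fun x => ‖x‖ ^ 2) ρ) :
    ∫ x, quadFeature x ∂ρ = WithLp.toLp 2 fun
      | none => 1
      | some (.inl (i, j)) => ∫ x, x i * x j ∂ρ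
      | some (.inr i) => √2 * meanVec ρ i := by
  ext k
  rw [EuclideanSpace.integral_apply (integrable_quadFeature hρ)]
  rcases k with _ | ⟨i, j⟩ | i <;> simp [quadFeature, integral_const_mul, meanVec_apply hρ]

theorem covMatrix_add_meanVec_mul [IsProbabilityMeasure ρ]
    (hρ : Integrable (fun x => ‖x‖ ^ 2) ρ) (i j : Fin d) :
    covMatrix ρ i j + meanVec ρ i * meanVec ρ j = ∫ x, x i * x j ∂ρ := by
  have hi := integrable_coord hρ i
  have hj := integrable_coord hρ j
  have hij := integrable_coord_mul_coord hρ i j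
  have hexpand : ∀ x : EuclideanSpace ℝ (Fin d), (x i - meanVec ρ i) * (x j - meanVec ρ j)
      = x i * x j - meanVec ρ i * x j - meanVec ρ j * x i + meanVec ρ i * meanVec ρ j :=
    fun x => by ring
  simp only [covMatrix, Matrix.of_apply, hexpand]
  rw [integral_add (by fun_prop) (by fun_prop), integral_sub (by fun_prop) (by fun_prop),
    integral_sub hij (by fun_prop), integral_const_mul, integral_const_mul, integral_const,
    ← meanVec_apply hρ, ← meanVec_apply hρ, probReal_univ, smul_eq_mul, one_mul]
  ring

theorem norm_integral_quadFeature_sub_sq [IsProbabilityMeasure ρ] [IsProbabilityMeasure ρ']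
    (hρ : Integrable (fun x => ‖x‖ ^ 2) ρ) (hρ' : Integrable (fun x => ‖x‖ ^ 2) ρ') :
    ‖∫ x, quadFeature x ∂ρ - ∫ x, quadFeature x ∂ρ'‖ ^ 2
      = 2 * ‖meanVec ρ - meanVec ρ'‖ ^ 2
        + ∑ i, ∑ j, (∫ x, x i * x j ∂ρ - ∫ x, x i * x j ∂ρ') ^ 2 := by
  simp only [integral_quadFeature hρ, integral_quadFeature hρ', EuclideanSpace.norm_sq_eq,
    Real.norm_eq_abs, sq_abs, Fintype.sum_option, Fintype.sum_sum_type, Fintype.sum_prod_type,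
    PiLp.sub_apply, Finset.mul_sum, ← mul_sub, mul_pow, Real.sq_sqrt zero_le_two, sub_self]
  ring

/-- The squared MMD induced by the quadratic kernel equals
`2‖μ-μ̃‖² + ‖(Σ + μμᵀ) - (Σ̃ + μ̃μ̃ᵀ)‖_F²`. -/
theorem stmt9 {d : ℕ} (ρ ρ' : Measure (EuclideanSpace ℝ (Fin d)))
    [IsProbabilityMeasure ρ] [IsProbabilityMeasure ρ']
    (hρ : Integrable (fun x => ‖x‖ ^ 2) ρ) (hρ' : Integrable (fun x => ‖x‖ ^ 2) ρ') :
    (∫ x, ∫ y, quadKernel x y ∂ρ ∂ρ)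
      - 2 * (∫ x, ∫ y, quadKernel x y ∂ρ' ∂ρ)
      + (∫ x, ∫ y, quadKernel x y ∂ρ' ∂ρ')
    = 2 * ‖meanVec ρ - meanVec ρ'‖ ^ 2
      + ∑ i, ∑ j,
          ((covMatrix ρ i j + meanVec ρ i * meanVec ρ j)
            - (covMatrix ρ' i j + meanVec ρ' i * meanVec ρ' j)) ^ 2 := by
  simp only [quadKernel_eq_inner_quadFeature, covMatrix_add_meanVec_mul hρ,
    covMatrix_add_meanVec_mul hρ']
  rw [← norm_integral_sub_integral_sq (integrable_quadFeature hρ) (integrable_quadFeature hρ'),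
    norm_integral_quadFeature_sub_sq hρ hρ']
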